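/- arXiv:2306.16350 — 2 statements merged into one kernel-verified Lean document; each statement's English description precedes it below -/
import Mathlib

section
/- Define M_EB(x) := min{1, x} for x ≥ 0. Under the composition (x3,M3) = (x2,M2)∘(x1,M1) with x3 = x2*x1 and M3 = M2 + x2*M1 + (|x2-1| + x2*|x1-1| - |x2*x1-1|)/2, if M1 ≥ M_EB(x1) or M2 ≥ M_EB(x2), then M3 ≥ M_EB(x3). -/
/-- Entanglement-breaking threshold for phase-insensitive Gaussian channels. -/
def M_EB (x : ℝ) : ℝ := min 1 x

set_option maxHeartbeats 1000000 in
theorem EB_preserved_under_composition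
    (x1 x2 M1 M2 : ℝ)
    (hx1 : 0 ≤ x1) (hx2 : 0 ≤ x2) (hM1 : 0 ≤ M1) (hM2 : 0 ≤ M2)
    (hEB : M_EB x1 ≤ M1 ∨ M_EB x2 ≤ M2) :
    M_EB (x2 * x1)
      ≤ M2 + x2 * M1 + (|x2 - 1| + x2 * |x1 - 1| - |x2 * x1 - 1|) / 2 := by
  simp only [M_EB] at *
  rcases le_total x1 1 with h1 | h1 <;>
  rcases le_total x2 1 with h2 | h2 <;>
  rcases le_total (x2*x1) 1 with h3 | h3 <;>
  rcases hEB with h | h <;>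
  simp_all [abs_of_nonneg, abs_of_nonpos, sub_nonneg, sub_nonpos, min_le_iff, le_min_iff] <;>
  nlinarith [mul_le_mul_of_nonneg_left h hx2, mul_nonneg hx2 hM1,
    mul_nonneg hx2 hx1, mul_nonneg hx2 (sub_nonneg.2 h1), mul_nonneg hx2 (sub_nonneg.2 h)]
end

section
/- For fixed N ≥ 0, the function η ↦ Q^att_FKG(η,N) := log₂(η/(1-η)) + h((1-η)N) - h(ηN) is monotonically nondecreasing in η on (1/2, 1), where h(x) := (x+1)log₂(x+1) - x log₂(x) with h(0)=0. -/
noncomputable def bosonicH (x : ℝ) : ℝ :=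
  (x + 1) * Real.logb 2 (x + 1) - x * Real.logb 2 x

/-! With `f t := log₂ t - h (t N)` one has `Q(η) = f η - f (1 - η)` for `0 < η < 1`, so it suffices
that `f` is nondecreasing on `(0, ∞)`: `η` increases while `1 - η` decreases. Since
`h' y = log₂ ((y + 1) / y) ≤ 1 / (y ln 2)`, one gets `f' t = (1 / t - N ln (1 + 1 / (t N))) / ln 2 ≥ 0`. -/

open Real Set

lemma hasDerivAt_bosonicH {x : ℝ} (hx : 0 < x) :
    HasDerivAt bosonicH ((log (x + 1) - log x) / log 2) x := by
  have hshift : HasDerivAt (fun y => (y + 1) * log (y + 1)) (log (x + 1) + 1) x :=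
    (hasDerivAt_mul_log (by positivity : x + 1 ≠ 0)).comp_add_const x 1
  have hform : bosonicH = fun y => ((y + 1) * log (y + 1) - y * log y) / log 2 := by
    funext y
    simp only [bosonicH, logb]
    ring
  rw [hform]
  exact ((hshift.fun_sub (hasDerivAt_mul_log hx.ne')).div_const (log 2)).congr_deriv (by ring)

lemma log_add_one_sub_log_le_inv {x : ℝ} (hx : 0 < x) : log (x + 1) - log x ≤ x⁻¹ := by
  rw [← log_div (by positivity) hx.ne']
  calc log ((x + 1) / x) ≤ (x + 1) / x - 1 := log_le_sub_one_of_pos (by positivity)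
    _ = x⁻¹ := by field_simp; ring

lemma hasDerivAt_logb_sub_bosonicH_mul {N t : ℝ} (hN : 0 < N) (ht : 0 < t) :
    HasDerivAt (fun s => logb 2 s - bosonicH (s * N))
      (t⁻¹ / log 2 - (log (t * N + 1) - log (t * N)) / log 2 * N) t :=
  ((hasDerivAt_log ht.ne').div_const (log 2)).sub
    ((hasDerivAt_bosonicH (mul_pos ht hN)).comp (h₂ := bosonicH) t (hasDerivAt_mul_const N))

lemma monotoneOn_logb_sub_bosonicH_mul {N : ℝ} (hN : 0 ≤ N) :
    MonotoneOn (fun t => logb 2 t - bosonicH (t * N)) (Ioi 0) := by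
  rcases hN.eq_or_lt with rfl | hN
  · simpa [bosonicH] using (strictMonoOn_logb one_lt_two).monotoneOn
  refine monotoneOn_of_hasDerivWithinAt_nonneg (convex_Ioi 0)
    (fun t ht => (hasDerivAt_logb_sub_bosonicH_mul hN ht).continuousAt.continuousWithinAt)
    (fun t ht => (hasDerivAt_logb_sub_bosonicH_mul hN (interior_subset ht)).hasDerivWithinAt)
    (fun t ht => ?_)
  rw [interior_Ioi] at ht
  have hgap : (log (t * N + 1) - log (t * N)) * N ≤ t⁻¹ :=
    calc (log (t * N + 1) - log (t * N)) * N ≤ (t * N)⁻¹ * N :=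
          mul_le_mul_of_nonneg_right (log_add_one_sub_log_le_inv (mul_pos ht hN)) hN.le
      _ = t⁻¹ := by field_simp
  rw [div_mul_eq_mul_div, sub_nonneg]
  exact div_le_div_of_nonneg_right hgap (log_pos one_lt_two).le

theorem QattFKG_monotone_in_eta
    (N : ℝ) (hN : 0 ≤ N) :
    MonotoneOn (fun η : ℝ =>
        Real.logb 2 (η / (1 - η)) + bosonicH ((1 - η) * N) - bosonicH (η * N))
      (Set.Ioo (1 / 2 : ℝ) 1) := by
  have hf := monotoneOn_logb_sub_bosonicH_mul hN
  intro a ha b hb hab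
  have ha₀ : 0 < a := by linarith [ha.1]
  have hb₀ : 0 < b := by linarith [hb.1]
  have ha₁ : 0 < 1 - a := by linarith [ha.2]
  have hb₁ : 0 < 1 - b := by linarith [hb.2]
  have hforward := hf ha₀ hb₀ hab
  have hbackward := hf (mem_Ioi.2 hb₁) (mem_Ioi.2 ha₁) (by linarith)
  simp only [logb_div ha₀.ne' ha₁.ne', logb_div hb₀.ne' hb₁.ne'] at hforward hbackward ⊢
  linarith
end
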